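/- For all d ≥ 3, any d-hitting family of permutations for the antichain on n elements (n ≥ d) has size at least (d / (2 log_2(d+1))) · log_2 n − O(1); more precisely, with r = ⌊(d−1)/2⌋, its size k satisfies (n − 1)_r ≤ (r + 1)^k, where (x)_r is the falling factorial. -/

import Mathlib

/-- A schedule for a partial order is a linear extension: a linear order
relation `r` that extends the partial order. -/
def IsSchedule {α : Type*} [PartialOrder α] (r : α → α → Prop) : Prop :=
  IsLinearOrder α r ∧ ∀ x y : α, x ≤ y → r x y

/-- A schedule `r` hits the tuple `a` if it orders `a 0, a 1, ...` in this order. -/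
def Hits {α : Type*} (r : α → α → Prop) {d : ℕ} (a : Fin d → α) : Prop :=
  ∀ i j : Fin d, i < j → r (a i) (a j)

/-- A `d`-tuple of distinct events is admissible if no later component is
strictly below an earlier one. -/
def Admissible {α : Type*} [PartialOrder α] {d : ℕ} (a : Fin d → α) : Prop :=
  Function.Injective a ∧ ∀ i j : Fin d, i < j → ¬ (a j < a i)

/-- A family of schedules (indexed by `Fin k`) is `d`-hitting if every member is a
schedule and every admissible `d`-tuple is hit by some member. -/
def IsHittingFamily {α : Type*} [PartialOrder α] {k : ℕ} (F : Fin k → (α → α → Prop)) (d : ℕ) : Prop :=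
  (∀ i, IsSchedule (F i)) ∧ ∀ a : Fin d → α, Admissible a → ∃ i, Hits (F i) a

/-- The antichain on `n` elements: `n` pairwise incomparable events. -/
def Antichain (n : ℕ) := Fin n

/-- The discrete partial order on the antichain: distinct elements are incomparable. -/
instance Antichain.instPartialOrder {n : ℕ} : PartialOrder (Antichain n) where
  le x y := x = y
  le_refl _ := rfl
  le_trans _ _ _ h1 h2 := Eq.trans h1 h2
  le_antisymm _ _ h _ := h

/-!
Fix `v` and send each injective `r`-tuple `a` avoiding `v` to the set of schedules that order
`a 0, …, a (r-1), v` increasingly. This map is injective as soon as every injective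
`(r+2)`-tuple is hit: if some `b j` is not among the `a`'s, a schedule hitting `(a, v, b j)` lies
in the set of `a` but not in that of `b`; otherwise `b` is a reordering of `a`, and a schedule
hitting `(a, v)` cannot also sort `b`. On the antichain every injective tuple of length at most
`d ≤ n` is hit, since it extends to an injective `d`-tuple. Hence `(n-1)_r ≤ 2^k ≤ (r+1)^k`, and
`r + 2 ≤ d` holds for `r = ⌊(d-1)/2⌋`. The logarithmic bound follows from `(n/2)^r ≤ (n-r)^r ≤ (n-1)_r`.
-/

open Function

section Hits

variable {α : Type*} {r : α → α → Prop}

theorem hits_iff_pairwise_ofFn {m : ℕ} {a : Fin m → α} : Hits r a ↔ (List.ofFn a).Pairwise r :=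
  List.pairwise_ofFn.symm

theorem hits_snoc_iff {m : ℕ} {a : Fin m → α} {x : α} :
    Hits r (Fin.snoc a x) ↔ Hits r a ∧ ∀ j, r (a j) x := by
  rw [hits_iff_pairwise_ofFn, hits_iff_pairwise_ofFn, List.ofFn_succ']
  simp [List.pairwise_append]

theorem eq_of_hits_of_range_subset [Std.Antisymm r] {m : ℕ} {a b : Fin m → α}
    (hinj : Injective b) (ha : Hits r a) (hb : Hits r b) (hba : Set.range b ⊆ Set.range a) :
    a = b := by
  refine List.ofFn_injective (List.Perm.eq_of_pairwise' (hits_iff_pairwise_ofFn.1 ha)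
    (hits_iff_pairwise_ofFn.1 hb) ?_)
  refine (((List.nodup_ofFn.2 hinj).subperm fun x => ?_).perm_of_length_le (by simp)).symm
  simpa using @hba x

end Hits

section Counting

variable {α ι : Type*} {R : ι → α → α → Prop} [∀ i, Std.Antisymm (R i)] {r : ℕ}

theorem injective_setOf_hits_snoc
    (hR : ∀ m ≤ r + 2, ∀ u : Fin m → α, Injective u → ∃ i, Hits (R i) u) (v : α) :
    Injective fun a : Fin r ↪ {x // x ≠ v} => {i | Hits (R i) (Fin.snoc (Subtype.val ∘ a) v)} := by
  intro a b hab
  set a' : Fin r → α := Subtype.val ∘ a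
  set b' : Fin r → α := Subtype.val ∘ b
  have ha' : Injective a' := Subtype.val_injective.comp a.injective
  have hva : v ∉ Set.range a' := fun ⟨j, hj⟩ => (a j).2 hj
  have hav : Injective (Fin.snoc a' v : Fin (r + 1) → α) := Fin.snoc_injective_of_injective ha' hva
  have mem_iff (i : ι) : Hits (R i) (Fin.snoc a' v) ↔ Hits (R i) (Fin.snoc b' v) :=
    Set.ext_iff.1 hab i
  by_cases hba : Set.range b' ⊆ Set.range a'
  · obtain ⟨i, hi⟩ := hR (r + 1) (by omega) _ hav
    have hib := (mem_iff i).1 hi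
    have hab' := eq_of_hits_of_range_subset (Subtype.val_injective.comp b.injective)
      (hits_snoc_iff.1 hi).1 (hits_snoc_iff.1 hib).1 hba
    exact Embedding.ext fun j => Subtype.ext (congrFun hab' j)
  · obtain ⟨_, ⟨j, rfl⟩, hja⟩ := Set.not_subset.1 hba
    have hbv : b' j ≠ v := (b j).2
    obtain ⟨i, hi⟩ := hR (r + 2) le_rfl _ (Fin.snoc_injective_of_injective hav (by
      rintro ⟨k, hk⟩
      induction k using Fin.lastCases with
      | last => exact hbv (by simpa using hk.symm)
      | cast k => exact hja ⟨k, by simpa using hk⟩))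
    obtain ⟨hia, hvb⟩ := hits_snoc_iff.1 hi
    have hbv' := (hits_snoc_iff.1 ((mem_iff i).1 hia)).2 j
    exact absurd (antisymm hbv' (by simpa using hvb (Fin.last r))) hbv

theorem descFactorial_card_sub_one_le_two_pow [Fintype α] [Nonempty α] [Fintype ι]
    (hR : ∀ m ≤ r + 2, ∀ u : Fin m → α, Injective u → ∃ i, Hits (R i) u) :
    (Fintype.card α - 1).descFactorial r ≤ 2 ^ Fintype.card ι := by
  classical
  obtain ⟨v⟩ := ‹Nonempty α›
  calc (Fintype.card α - 1).descFactorial r = Fintype.card (Fin r ↪ {x // x ≠ v}) := by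
        rw [Fintype.card_embedding_eq, Fintype.card_fin, Fintype.card_subtype_compl,
          Fintype.card_subtype_eq]
    _ ≤ Fintype.card (Set ι) := Fintype.card_le_of_injective _ (injective_setOf_hits_snoc hR v)
    _ = 2 ^ Fintype.card ι := Fintype.card_set

end Counting

theorem Fin.exists_append_injective {α : Type*} [Fintype α] {m j : ℕ} {u : Fin m → α}
    (hu : Injective u) (h : m + j ≤ Fintype.card α) :
    ∃ w : Fin j → α, Injective (Fin.append u w) := by
  classical
  obtain ⟨w⟩ : Nonempty (Fin j ↪ {x // x ∉ Set.range u}) := by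
    refine Function.Embedding.nonempty_of_card_le ?_
    rw [Fintype.card_fin, Fintype.card_subtype_compl, Set.card_range_of_injective hu,
      Fintype.card_fin]
    omega
  exact ⟨Subtype.val ∘ w, Fin.append_injective_iff.2
    ⟨hu, Subtype.val_injective.comp w.injective, fun i k hik => (w k).2 ⟨i, hik⟩⟩⟩

namespace Antichain

instance {n : ℕ} : Fintype (Antichain n) := inferInstanceAs (Fintype (Fin n))

theorem card (n : ℕ) : Fintype.card (Antichain n) = n := Fintype.card_fin n

theorem not_lt {n : ℕ} (x y : Antichain n) : ¬ x < y := fun h => h.ne h.le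

theorem admissible_iff {n d : ℕ} {a : Fin d → Antichain n} : Admissible a ↔ Injective a :=
  ⟨And.left, fun ha => ⟨ha, fun _ _ _ => not_lt _ _⟩⟩

end Antichain

theorem IsHittingFamily.exists_hits_of_injective {n d k m : ℕ}
    {F : Fin k → Antichain n → Antichain n → Prop} (hF : IsHittingFamily F d) (hmd : m ≤ d)
    (hdn : d ≤ n) {u : Fin m → Antichain n} (hu : Injective u) : ∃ i, Hits (F i) u := by
  obtain ⟨j, rfl⟩ := Nat.exists_eq_add_of_le hmd
  obtain ⟨w, hw⟩ := Fin.exists_append_injective hu (by rwa [Antichain.card])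
  obtain ⟨i, hi⟩ := hF.2 _ (Antichain.admissible_iff.2 hw)
  exact ⟨i, fun p q hpq => by simpa using hi _ _ (Fin.strictMono_castAdd j hpq)⟩

theorem IsHittingFamily.antisymm {α : Type*} [PartialOrder α] {k d : ℕ}
    {F : Fin k → α → α → Prop} (hF : IsHittingFamily F d) (i : Fin k) : Std.Antisymm (F i) :=
  (hF.1 i).1.toAntisymm

open Real

theorem mul_logb_two_sub_one_le {n r k : ℕ} (hrn : 2 * r ≤ n) (h : (n - r) ^ r ≤ 2 ^ k) :
    (r : ℝ) * (logb 2 n - 1) ≤ k := by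
  rcases Nat.eq_zero_or_pos r with rfl | hr
  · simp
  have hn : (0 : ℝ) < n := by norm_cast; omega
  have hrn' : (2 * r : ℝ) ≤ n := by exact_mod_cast hrn
  have hhalf : ((n : ℝ) / 2) ^ r ≤ 2 ^ k := by
    calc ((n : ℝ) / 2) ^ r ≤ ((n - r : ℕ) : ℝ) ^ r := by
          gcongr
          rw [Nat.cast_sub (by omega)]
          linarith
      _ ≤ 2 ^ k := by exact_mod_cast h
  have := logb_le_logb_of_le one_lt_two (by positivity) hhalf
  rwa [logb_pow, logb_pow, logb_self_eq_one one_lt_two, logb_div hn.ne' two_ne_zero,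
    logb_self_eq_one one_lt_two, mul_one] at this

theorem div_two_mul_logb_two_le {d : ℕ} (hd : 3 ≤ d) :
    (d : ℝ) / (2 * logb 2 ((d : ℝ) + 1)) ≤ ((d - 1) / 2 : ℕ) := by
  have hd' : (3 : ℝ) ≤ d := by exact_mod_cast hd
  have hlog : 2 ≤ logb 2 ((d : ℝ) + 1) := by
    rw [le_logb_iff_rpow_le one_lt_two (by positivity)]
    norm_num
    linarith
  have hd4 : (d : ℝ) ≤ 4 * ((d - 1) / 2 : ℕ) := by exact_mod_cast (by omega : d ≤ 4 * ((d - 1) / 2))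
  rw [div_le_iff₀ (by positivity)]
  nlinarith

/-- for `d ≥ 3`, every `d`-hitting family for the antichain on `n ≥ d`
elements has size `k` satisfying `(n−1)_r ≤ (r+1)^k` where `r = ⌊(d−1)/2⌋` and
`(x)_r` is the falling factorial; consequently
`k ≥ (d / (2 log₂(d+1))) · log₂ n − O(1)` where the `O(1)` constant depends only on `d`. -/
theorem antichain_hitting_lower_bound (d : ℕ) (hd : 3 ≤ d) :
    ∃ C : ℝ, ∀ (n k : ℕ), d ≤ n →
      ∀ F : Fin k → (Antichain n → Antichain n → Prop), IsHittingFamily F d →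
        Nat.descFactorial (n - 1) ((d - 1) / 2) ≤ ((d - 1) / 2 + 1) ^ k ∧
        (d : ℝ) / (2 * Real.logb 2 ((d : ℝ) + 1)) * Real.logb 2 (n : ℝ) - C ≤ k := by
  set r := (d - 1) / 2
  refine ⟨r, fun n k hdn F hF => ?_⟩
  have : ∀ i, Std.Antisymm (F i) := hF.antisymm
  have : Nonempty (Antichain n) := ⟨(⟨0, by omega⟩ : Fin n)⟩
  have hcount : (n - 1).descFactorial r ≤ 2 ^ k := by
    simpa [Antichain.card] using descFactorial_card_sub_one_le_two_pow (R := F) (r := r)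
      fun m hm _ hu => hF.exists_hits_of_injective (by omega) hdn hu
  refine ⟨hcount.trans (Nat.pow_le_pow_left (by omega) k), ?_⟩
  have hpow : (n - r) ^ r ≤ 2 ^ k := by
    simpa [Nat.sub_add_cancel (by omega : 1 ≤ n)] using
      (Nat.pow_sub_le_descFactorial (n - 1) r).trans hcount
  have hlog := mul_logb_two_sub_one_le (by omega) hpow
  have hcoef : _ ≤ (r : ℝ) := div_two_mul_logb_two_le hd
  have hn : 0 ≤ logb 2 (n : ℝ) := logb_nonneg one_lt_two (by exact_mod_cast (by omega : 1 ≤ n))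
  nlinarith
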